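/- Let H be the 3-dimensional bialgebra over K with basis {x, y, z}, multiplication x²=x, y²=y, z²=0, xy=yx=y, yz=z, xz=zx=z, zy=0, comultiplication Δ(u)=u⊗u for u ∈ {x,y,z}. For c, d ∈ K define P₂(x) = −cx − cy, P₂(y) = −cy, P₂(z) = −cz and Q(x)=dz, Q(y)=dz, Q(z)=0. Then (H, P₂, Q) is a Rota-Baxter bialgebra of weight (c, d). -/
import Mathlib


open TensorProduct LinearMap

section ThreeDim

variable (K : Type*) [Field K]

/-- Basis vectors `x = e 0`, `y = e 1`, `z = e 2` of the 3-dimensional space. -/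
noncomputable def e (i : Fin 3) : Fin 3 → K := Pi.single i 1

/-- The multiplication determined by `x²=x, y²=y, z²=0, xy=yx=y, yz=z, xz=zx=z, zy=0`,
written in coordinates with respect to the basis `{x, y, z}`. -/
def mulFun (u v : Fin 3 → K) : Fin 3 → K :=
  ![u 0 * v 0, u 0 * v 1 + u 1 * v 0 + u 1 * v 1, u 0 * v 2 + u 2 * v 0 + u 1 * v 2]

/-- The multiplication as a bilinear map. -/
noncomputable def mulB : (Fin 3 → K) →ₗ[K] (Fin 3 → K) →ₗ[K] (Fin 3 → K) :=
  LinearMap.mk₂ K (mulFun K)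
    (fun u u' v => by funext i; fin_cases i <;> simp [mulFun] <;> ring)
    (fun a u v => by funext i; fin_cases i <;> simp [mulFun] <;> ring)
    (fun u v v' => by funext i; fin_cases i <;> simp [mulFun] <;> ring)
    (fun a u v => by funext i; fin_cases i <;> simp [mulFun] <;> ring)

/-- The multiplication as a linear map on the tensor square. -/
noncomputable def mulL : (Fin 3 → K) ⊗[K] (Fin 3 → K) →ₗ[K] (Fin 3 → K) :=
  TensorProduct.lift (mulB K)

/-- The comultiplication `Δ(x) = x⊗x`, `Δ(y) = y⊗y`, `Δ(z) = z⊗z`. -/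
noncomputable def comulD : (Fin 3 → K) →ₗ[K] (Fin 3 → K) ⊗[K] (Fin 3 → K) :=
  (LinearMap.proj 0).smulRight (e K 0 ⊗ₜ[K] e K 0) +
  (LinearMap.proj 1).smulRight (e K 1 ⊗ₜ[K] e K 1) +
  (LinearMap.proj 2).smulRight (e K 2 ⊗ₜ[K] e K 2)

end ThreeDim

/-- `P₂(x) = −cx − cy`, `P₂(y) = −cy`, `P₂(z) = −cz`. -/
noncomputable def P2 (K : Type*) [Field K] (c : K) : (Fin 3 → K) →ₗ[K] (Fin 3 → K) :=
  (LinearMap.proj 0).smulRight (-(c • e K 0) - c • e K 1) +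
  (LinearMap.proj 1).smulRight (-(c • e K 1)) +
  (LinearMap.proj 2).smulRight (-(c • e K 2))

/-- `Q(x) = d z`, `Q(y) = d z`, `Q(z) = 0`. -/
noncomputable def Q3 (K : Type*) [Field K] (d : K) : (Fin 3 → K) →ₗ[K] (Fin 3 → K) :=
  (LinearMap.proj 0).smulRight (d • e K 2) + (LinearMap.proj 1).smulRight (d • e K 2)

/-- `(H, P₂, Q)` is a Rota--Baxter bialgebra of weight `(c, d)`. -/
theorem threeDim_rotaBaxterBialgebra_P2 (K : Type*) [Field K] (c d : K) :
    -- Rota--Baxter algebra identity of weight c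
    (∀ u v : Fin 3 → K, mulB K (P2 K c u) (P2 K c v) =
      P2 K c (mulB K u (P2 K c v)) + P2 K c (mulB K (P2 K c u) v) +
        c • P2 K c (mulB K u v)) ∧
    -- Rota--Baxter coalgebra identity of weight d
    (TensorProduct.map (Q3 K d) (Q3 K d) ∘ₗ comulD K =
      lTensor (Fin 3 → K) (Q3 K d) ∘ₗ comulD K ∘ₗ Q3 K d +
      rTensor (Fin 3 → K) (Q3 K d) ∘ₗ comulD K ∘ₗ Q3 K d +
      d • (comulD K ∘ₗ Q3 K d)) := by
  constructor
  · intro u v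
    funext i
    fin_cases i <;>
      simp [mulB, mulFun, P2, e, Pi.single_apply] <;> ring
  · apply LinearMap.ext
    intro u
    simp [comulD, Q3, e, Pi.single_apply, TensorProduct.tmul_add, TensorProduct.add_tmul,
      TensorProduct.smul_tmul', TensorProduct.tmul_smul, smul_smul]
    rw [← TensorProduct.add_tmul, ← add_smul]
    congr 2
    ring
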